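/- arXiv:2402.11945 — 4 statements merged into one kernel-verified Lean document; each statement's English description precedes it below -/
import Mathlib

section
/- Let 𝔽_q be a finite field of odd cardinality q and n ≥ 1. The number of symmetric matrices x ∈ M_n(𝔽_q) with rank(x) ≤ 1 is exactly q^n. -/
/-!
If `A` is symmetric of rank at most one and `i` is the first index with `A i i ≠ 0`, the vanishing
of the `2 × 2` minors gives `A = r rᵀ / r i` for the row `r = A i`, and `i` is also the first index
where `r` is nonzero. Hence `r ↦ r rᵀ / (first nonzero entry of r)` is a bijection from `Fⁿ` onto
the symmetric matrices of rank at most one, the zero vector going to the zero matrix.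
-/

open Matrix

namespace Matrix

variable {m n K : Type*} [Field K]

theorem exists_vecMulVec_eq_of_rank_le_one [Fintype n] {A : Matrix m n K}
    (h : A.rank ≤ 1) : ∃ u v, A = vecMulVec u v := by
  rw [rank_eq_finrank_span_cols] at h
  have := FiniteDimensional.span_of_finite K (Set.finite_range A.col)
  obtain ⟨w, hw⟩ := finrank_le_one_iff.1 h
  have hcol (j : n) : ∃ c : K, c • (w : m → K) = A.col j :=
    (hw ⟨A.col j, Submodule.subset_span (Set.mem_range_self j)⟩).imp
      fun _ hc => congrArg Subtype.val hc
  choose c hc using hcol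
  refine ⟨w, c, ?_⟩
  ext i j
  rw [vecMulVec_apply, mul_comm, ← col_apply A j i, ← hc j, Pi.smul_apply, smul_eq_mul]

theorem mul_mul_eq_of_rank_le_one [Fintype n] {A : Matrix m n K}
    (h : A.rank ≤ 1) (i k : m) (j l : n) : A i j * A k l = A i l * A k j := by
  obtain ⟨u, v, rfl⟩ := exists_vecMulVec_eq_of_rank_le_one h
  simp only [vecMulVec_apply]
  ring

theorem IsSymm.mul_eq_of_rank_le_one [Fintype n] {A : Matrix n n K} (hA : A.IsSymm)
    (h : A.rank ≤ 1) (i j k : n) : A i i * A j k = A i j * A i k := by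
  rw [mul_mul_eq_of_rank_le_one h i j i k, hA.apply i j, mul_comm]

theorem IsSymm.exists_apply_self_ne_zero_of_rank_le_one [Fintype n] {A : Matrix n n K}
    (hA : A.IsSymm) (h : A.rank ≤ 1) (h0 : A ≠ 0) : ∃ i, A i i ≠ 0 := by
  obtain ⟨i, j, hij⟩ : ∃ i j, A i j ≠ 0 := by
    by_contra! hA0
    exact h0 (Matrix.ext hA0)
  refine ⟨i, fun hii => hij ?_⟩
  have := hA.mul_eq_of_rank_le_one h i j j
  rwa [hii, zero_mul, eq_comm, mul_self_eq_zero] at this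

end Matrix

section LeadingEntry

variable {ι K : Type*} [LinearOrder ι] [Zero K]

open Classical in
noncomputable def leadingEntry (r : ι → K) : K :=
  if h : ∃ i, r i ≠ 0 ∧ ∀ j < i, r j = 0 then r h.choose else 0

theorem leadingEntry_eq {r : ι → K} {i : ι} (hi : r i ≠ 0) (hlt : ∀ j < i, r j = 0) :
    leadingEntry r = r i := by
  have h : ∃ i, r i ≠ 0 ∧ ∀ j < i, r j = 0 := ⟨i, hi, hlt⟩
  have hchoose : h.choose = i := by
    obtain ⟨hci, hclt⟩ := h.choose_spec
    rcases lt_trichotomy h.choose i with hc | hc | hc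
    · exact absurd (hlt _ hc) hci
    · exact hc
    · exact absurd (hclt _ hc) hi
  rw [leadingEntry, dif_pos h, hchoose]

theorem exists_first_ne_zero [WellFoundedLT ι] {r : ι → K} (hr : r ≠ 0) :
    ∃ i, r i ≠ 0 ∧ ∀ j < i, r j = 0 := by
  obtain ⟨i, hi, hmin⟩ := wellFounded_lt.has_min {i | r i ≠ 0} (Function.ne_iff.1 hr)
  exact ⟨i, hi, fun j hj => by_contra fun hrj => hmin j hrj hj⟩

end LeadingEntry

section SymmRankOne

variable {ι K : Type*} [LinearOrder ι] [Field K]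

theorem leadingEntry_ne_zero [WellFoundedLT ι] {r : ι → K} (hr : r ≠ 0) :
    leadingEntry r ≠ 0 := by
  obtain ⟨i, hi, hlt⟩ := exists_first_ne_zero hr
  rwa [leadingEntry_eq hi hlt]

noncomputable def symmRankOne (r : ι → K) : Matrix ι ι K :=
  vecMulVec ((leadingEntry r)⁻¹ • r) r

theorem symmRankOne_apply (r : ι → K) (i j : ι) :
    symmRankOne r i j = (leadingEntry r)⁻¹ * r i * r j := by
  rw [symmRankOne, vecMulVec_apply, Pi.smul_apply, smul_eq_mul]

theorem isSymm_symmRankOne (r : ι → K) : (symmRankOne r).IsSymm := by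
  ext i j
  simp only [transpose_apply, symmRankOne_apply]
  ring

theorem rank_symmRankOne_le [Fintype ι] (r : ι → K) : (symmRankOne r).rank ≤ 1 :=
  rank_vecMulVec_le _ _

theorem symmRankOne_apply_self_ne_zero_iff [WellFoundedLT ι] (r : ι → K) (i : ι) :
    symmRankOne r i i ≠ 0 ↔ r i ≠ 0 := by
  refine ⟨fun h hri => h (by rw [symmRankOne_apply, hri, mul_zero]), fun hri => ?_⟩
  have hr : r ≠ 0 := fun h => hri (congrFun h i)
  rw [symmRankOne_apply]
  exact mul_ne_zero (mul_ne_zero (inv_ne_zero (leadingEntry_ne_zero hr)) hri) hri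

theorem symmRankOne_row_eq_self {r : ι → K} {i : ι} (hi : r i ≠ 0) (hlt : ∀ j < i, r j = 0) :
    symmRankOne r i = r := by
  ext j
  rw [symmRankOne_apply, leadingEntry_eq hi hlt, inv_mul_cancel₀ hi, one_mul]

theorem symmRankOne_injective [WellFoundedLT ι] :
    Function.Injective (symmRankOne : (ι → K) → Matrix ι ι K) := by
  intro r s hrs
  have hsupp (j : ι) : r j ≠ 0 ↔ s j ≠ 0 := by
    rw [← symmRankOne_apply_self_ne_zero_iff, hrs, symmRankOne_apply_self_ne_zero_iff]
  by_cases hr : r = 0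
  · subst hr
    funext j
    exact (not_not.1 fun h => (hsupp j).2 h rfl).symm
  obtain ⟨i, hi, hlt⟩ := exists_first_ne_zero hr
  have hsi : s i ≠ 0 := (hsupp i).1 hi
  have hslt (j : ι) (hj : j < i) : s j = 0 := not_not.1 fun h => (hsupp j).2 h (hlt j hj)
  rw [← symmRankOne_row_eq_self hi hlt, ← symmRankOne_row_eq_self hsi hslt, hrs]

theorem Matrix.IsSymm.symmRankOne_row_eq_self [Fintype ι] {A : Matrix ι ι K} (hA : A.IsSymm)
    (h : A.rank ≤ 1) {i : ι} (hi : A i i ≠ 0) (hlt : ∀ j < i, A j j = 0) :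
    symmRankOne (A i) = A := by
  have hfirst : leadingEntry (A i) = A i i := by
    refine leadingEntry_eq hi fun j hj => ?_
    have := hA.mul_eq_of_rank_le_one h i j j
    rwa [hlt j hj, mul_zero, eq_comm, mul_self_eq_zero] at this
  ext j k
  rw [symmRankOne_apply, hfirst, mul_assoc, ← hA.mul_eq_of_rank_le_one h, inv_mul_cancel_left₀ hi]

theorem symmRankOne_surjective [Fintype ι] {A : Matrix ι ι K} (hA : A.IsSymm) (h : A.rank ≤ 1) :
    ∃ r, symmRankOne r = A := by
  by_cases h0 : A = 0
  · exact ⟨0, by ext i j; simp [h0, symmRankOne_apply]⟩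
  obtain ⟨j, hj⟩ := hA.exists_apply_self_ne_zero_of_rank_le_one h h0
  obtain ⟨i, hi, hlt⟩ := exists_first_ne_zero (r := A.diag) fun hd => hj (congrFun hd j)
  exact ⟨A i, hA.symmRankOne_row_eq_self h hi hlt⟩

noncomputable def symmRankOneEquiv [Fintype ι] :
    (ι → K) ≃ {A : Matrix ι ι K // A.IsSymm ∧ A.rank ≤ 1} :=
  Equiv.ofBijective (fun r => ⟨symmRankOne r, isSymm_symmRankOne r, rank_symmRankOne_le r⟩)
    ⟨fun _ _ h => symmRankOne_injective (congrArg Subtype.val h),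
      fun A => (symmRankOne_surjective A.2.1 A.2.2).imp fun _ hr => Subtype.ext hr⟩

end SymmRankOne

theorem stmt_8_general {F : Type*} [Field F] [Fintype F] (n : ℕ) :
    Nat.card {x : Matrix (Fin n) (Fin n) F // xᵀ = x ∧ x.rank ≤ 1} =
      Fintype.card F ^ n := by
  calc Nat.card {x : Matrix (Fin n) (Fin n) F // xᵀ = x ∧ x.rank ≤ 1}
      = Nat.card (Fin n → F) := (Nat.card_congr symmRankOneEquiv).symm
    _ = Fintype.card F ^ n := by rw [Nat.card_fun, Nat.card_fin, Nat.card_eq_fintype_card]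

theorem stmt_8 {F : Type*} [Field F] [Fintype F]
    (hodd : Odd (Fintype.card F)) (n : ℕ) (hn : 1 ≤ n) :
    Nat.card {x : Matrix (Fin n) (Fin n) F // xᵀ = x ∧ x.rank ≤ 1} =
      Fintype.card F ^ n :=
  stmt_8_general n
end

section
/- Let X be a locally compact Hausdorff space and μ a positive Radon measure on X. Let ψ : X → ℝ be a nonnegative, bounded, compactly supported function that is continuous μ-almost everywhere. Suppose n is a natural number with ‖ψ‖_∞ ≤ n and ε > 0 satisfies ∫ ψ dμ ≤ ε. Then there exists a continuous compactly supported function h : X → ℝ such that ψ(x) ≤ h(x) ≤ 4n for μ-almost every x ∈ X, and ∫ h dμ ≤ 4·n·ε. -/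
/-!
Cut `ψ` into dyadic layers: with levels `tₖ = n / 2 ^ (k + 1)`, every `0 ≤ y ≤ n` satisfies
`y ≤ ∑ₖ tₖ 𝟙{tₖ ≤ y} ≤ 2 y`. As `ψ` is continuous almost everywhere, the compact set
`Cₖ = closure {tₖ ≤ ψ}` has no more measure than `{tₖ ≤ ψ}`. Urysohn's lemma and outer regularity
give continuous `fₖ : X → [0, 1]`, equal to `1` on `Cₖ`, vanishing off a fixed compact set, with
`∫ fₖ ≤ μ Cₖ + ηₖ`. Then `h = ∑ₖ tₖ fₖ` lies between `ψ` and `n`, and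
`∫ h ≤ ∑ₖ tₖ μ {tₖ ≤ ψ} + ∑ₖ tₖ ηₖ ≤ 2 ∫ ψ + 2 ε` once the `ηₖ` are small enough.
-/

open MeasureTheory Set
open scoped ENNReal

lemma hasSum_div_two_pow_succ (c : ℝ) : HasSum (fun k : ℕ => c / 2 ^ (k + 1)) c := by
  simpa only [pow_succ', div_div] using hasSum_geometric_two' c

noncomputable def dyadicLayerSum (c y : ℝ) : ℝ :=
  ∑' k : ℕ, if c / 2 ^ (k + 1) ≤ y then c / 2 ^ (k + 1) else 0

lemma summable_dyadicLayer (c y : ℝ) :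
    Summable fun k : ℕ => if c / 2 ^ (k + 1) ≤ y then c / 2 ^ (k + 1) else 0 := by
  refine (hasSum_div_two_pow_succ c).summable.abs.of_norm_bounded fun k => ?_
  split_ifs <;> simp [abs_div, div_nonneg]

lemma dyadicLayerSum_eq_of_forall_iff {c y : ℝ} {k₀ : ℕ}
    (h : ∀ k, c / 2 ^ (k + 1) ≤ y ↔ k₀ ≤ k) : dyadicLayerSum c y = c / 2 ^ k₀ := by
  rw [dyadicLayerSum, ← (summable_dyadicLayer c y).sum_add_tsum_nat_add k₀,
    Finset.sum_eq_zero fun k hk => if_neg ((h k).not.2 (by simpa using hk)), zero_add]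
  simp_rw [h, le_add_self, if_true]
  refine Eq.trans (tsum_congr fun k => ?_) (hasSum_div_two_pow_succ (c / 2 ^ k₀)).tsum_eq
  rw [div_div, ← pow_add, add_right_comm, add_comm k₀]

lemma exists_dyadicLayerSum_eq {c y : ℝ} (hc : 0 ≤ c) (hy : 0 < y) :
    ∃ k₀ : ℕ, dyadicLayerSum c y = c / 2 ^ k₀ ∧ c / 2 ^ (k₀ + 1) ≤ y ∧
      ∀ k < k₀, y < c / 2 ^ (k + 1) := by
  classical
  have hex : ∃ k : ℕ, c / 2 ^ (k + 1) ≤ y :=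
    ((hasSum_div_two_pow_succ c).summable.tendsto_atTop_zero.eventually
      (gt_mem_nhds hy)).exists.imp fun _ => le_of_lt
  refine ⟨Nat.find hex, dyadicLayerSum_eq_of_forall_iff fun k => ⟨Nat.find_min' hex, fun hk => ?_⟩,
    Nat.find_spec hex, fun k hk => not_le.1 (Nat.find_min hex hk)⟩
  refine le_trans ?_ (Nat.find_spec hex)
  exact div_le_div_of_nonneg_left hc (by positivity) (pow_le_pow_right₀ one_le_two (by omega))

lemma le_dyadicLayerSum {c y : ℝ} (hc : 0 ≤ c) (hyc : y ≤ c) : y ≤ dyadicLayerSum c y := by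
  rcases le_or_gt y 0 with hy | hy
  · exact hy.trans (tsum_nonneg fun k => by split_ifs <;> positivity)
  obtain ⟨k₀, hsum, -, hmin⟩ := exists_dyadicLayerSum_eq hc hy
  rw [hsum]
  cases k₀ with
  | zero => simpa using hyc
  | succ j => exact (hmin j j.lt_succ_self).le

lemma dyadicLayerSum_le {c y : ℝ} (hc : 0 ≤ c) (hy : 0 ≤ y) : dyadicLayerSum c y ≤ 2 * y := by
  rcases hy.eq_or_lt with rfl | hy
  · rw [mul_zero]
    exact tsum_nonpos fun k => by split_ifs with h <;> simp [h]
  obtain ⟨k₀, hsum, hle, -⟩ := exists_dyadicLayerSum_eq hc hy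
  rw [hsum, pow_succ, ← div_div] at *
  linarith

section MeasureLemmas

variable {X : Type*} [MeasurableSpace X]

lemma measure_closure_setOf_le_le [TopologicalSpace X] {μ : Measure X} {α : Type*}
    [TopologicalSpace α] [Preorder α] [OrderClosedTopology α] {f : X → α}
    (hf : μ {x | ¬ContinuousAt f x} = 0) (t : α) :
    μ (closure {x | t ≤ f x}) ≤ μ {x | t ≤ f x} :=
  measure_mono_ae <| (ae_iff.2 hf).mono fun _ hx hmem =>
    continuousWithinAt_const.closure_le hmem hx.continuousWithinAt fun _ hy => hy

lemma tsum_ofReal_mul_measure_le_two_mul_lintegral {μ : Measure X} {f : X → ℝ}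
    (hf : AEMeasurable f μ) (hf₀ : ∀ x, 0 ≤ f x) {c : ℝ} (hc : 0 ≤ c) :
    ∑' k : ℕ, ENNReal.ofReal (c / 2 ^ (k + 1)) * μ {x | c / 2 ^ (k + 1) ≤ f x}
      ≤ 2 * ∫⁻ x, ENNReal.ofReal (f x) ∂μ := by
  have hnull (k : ℕ) : NullMeasurableSet {x | c / 2 ^ (k + 1) ≤ f x} μ :=
    nullMeasurableSet_le aemeasurable_const hf
  calc ∑' k : ℕ, ENNReal.ofReal (c / 2 ^ (k + 1)) * μ {x | c / 2 ^ (k + 1) ≤ f x}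
      = ∫⁻ x, ∑' k : ℕ, {x | c / 2 ^ (k + 1) ≤ f x}.indicator
          (fun _ => ENNReal.ofReal (c / 2 ^ (k + 1))) x ∂μ := by
        rw [lintegral_tsum fun k => aemeasurable_const.indicator₀ (hnull k)]
        simp_rw [lintegral_indicator_const₀ (hnull _)]
    _ = ∫⁻ x, ENNReal.ofReal (dyadicLayerSum c (f x)) ∂μ := by
        refine lintegral_congr fun x => ?_
        rw [dyadicLayerSum, ENNReal.ofReal_tsum_of_nonneg (fun k => by split_ifs <;> positivity)
          (summable_dyadicLayer c (f x))]
        simp only [indicator_apply, mem_ofPred_eq, apply_ite ENNReal.ofReal, ENNReal.ofReal_zero]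
    _ ≤ ∫⁻ x, 2 * ENNReal.ofReal (f x) ∂μ := lintegral_mono fun x => by
        rw [← ENNReal.ofReal_ofNat 2, ← ENNReal.ofReal_mul zero_le_two]
        exact ENNReal.ofReal_le_ofReal (dyadicLayerSum_le hc (hf₀ x))
    _ = 2 * ∫⁻ x, ENNReal.ofReal (f x) ∂μ := lintegral_const_mul' _ _ ENNReal.ofNat_ne_top

lemma exists_continuous_eqOn_one_lintegral_le [TopologicalSpace X] [RegularSpace X]
    [LocallyCompactSpace X] [OpensMeasurableSpace X] (μ : Measure X) [μ.OuterRegular]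
    {K V : Set X} (hK : IsCompact K) (hV : IsOpen V) (hKV : K ⊆ V) {δ : ℝ≥0∞} (hδ : δ ≠ 0) :
    ∃ f : C(X, ℝ), EqOn f 1 K ∧ EqOn f 0 Vᶜ ∧ (∀ x, f x ∈ Icc (0 : ℝ) 1) ∧
      ∫⁻ x, ENNReal.ofReal (f x) ∂μ ≤ μ K + δ := by
  obtain ⟨U, hKU, hU, hμU⟩ := K.exists_isOpen_le_add μ hδ
  obtain ⟨f, hf₁, hf₀, -, hf⟩ := exists_continuous_one_zero_of_isCompact hK
    (hU.inter hV).isClosed_compl (disjoint_compl_right_iff_subset.2 (subset_inter hKU hKV))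
  refine ⟨f, hf₁, fun x hx => hf₀ fun hxUV => hx hxUV.2, hf, ?_⟩
  calc ∫⁻ x, ENNReal.ofReal (f x) ∂μ ≤ ∫⁻ x, (U ∩ V).indicator 1 x ∂μ := by
        refine lintegral_mono fun x => ?_
        by_cases hx : x ∈ U ∩ V
        · simpa [hx] using (hf x).2
        · simp [hx, hf₀ hx]
    _ = μ (U ∩ V) := lintegral_indicator_one (hU.inter hV).measurableSet
    _ ≤ μ K + δ := (measure_mono inter_subset_left).trans hμU

end MeasureLemmas

section BumpSeries

variable {X : Type*} [TopologicalSpace X] {f : ℕ → C(X, ℝ)} {a : ℕ → ℝ}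

lemma summable_mul_of_mem_Icc (hf : ∀ k x, f k x ∈ Icc (0 : ℝ) 1) (ha : ∀ k, 0 ≤ a k)
    (has : Summable a) (x : X) : Summable fun k => a k * f k x :=
  has.of_nonneg_of_le (fun k => mul_nonneg (ha k) (hf k x).1)
    fun k => mul_le_of_le_one_right (ha k) (hf k x).2

lemma continuous_tsum_mul (hf : ∀ k x, f k x ∈ Icc (0 : ℝ) 1) (ha : ∀ k, 0 ≤ a k)
    (has : Summable a) : Continuous fun x => ∑' k, a k * f k x :=
  continuous_tsum (fun k => continuous_const.mul (f k).continuous) has fun k x => by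
    rw [norm_mul, Real.norm_of_nonneg (ha k), Real.norm_of_nonneg (hf k x).1]
    exact mul_le_of_le_one_right (ha k) (hf k x).2

lemma lintegral_ofReal_tsum_mul [MeasurableSpace X] [OpensMeasurableSpace X] (μ : Measure X)
    (hf : ∀ k x, f k x ∈ Icc (0 : ℝ) 1) (ha : ∀ k, 0 ≤ a k) (has : Summable a) :
    ∫⁻ x, ENNReal.ofReal (∑' k, a k * f k x) ∂μ
      = ∑' k, ENNReal.ofReal (a k) * ∫⁻ x, ENNReal.ofReal (f k x) ∂μ := by
  simp_rw [ENNReal.ofReal_tsum_of_nonneg (fun k => mul_nonneg (ha k) (hf k _).1)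
    (summable_mul_of_mem_Icc hf ha has _), ENNReal.ofReal_mul (ha _)]
  have hmeas (k : ℕ) : Measurable fun x => ENNReal.ofReal (f k x) :=
    ENNReal.measurable_ofReal.comp (f k).continuous.measurable
  rw [lintegral_tsum fun k => ((hmeas k).const_mul _).aemeasurable]
  simp_rw [lintegral_const_mul _ (hmeas _)]

lemma lintegral_ofReal_tsum_dyadic_mul_le [MeasurableSpace X] [OpensMeasurableSpace X]
    {μ : Measure X} {ψ : X → ℝ} {c : ℝ} {η : ℕ → ℝ≥0∞} (hc : 0 ≤ c) (hψ₀ : ∀ x, 0 ≤ ψ x)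
    (hψ : AEMeasurable ψ μ) (hae : μ {x | ¬ContinuousAt ψ x} = 0)
    (hf : ∀ k x, f k x ∈ Icc (0 : ℝ) 1)
    (hfμ : ∀ k, ∫⁻ x, ENNReal.ofReal (f k x) ∂μ ≤ μ (closure {x | c / 2 ^ (k + 1) ≤ ψ x}) + η k) :
    ∫⁻ x, ENNReal.ofReal (∑' k, c / 2 ^ (k + 1) * f k x) ∂μ
      ≤ 2 * ∫⁻ x, ENNReal.ofReal (ψ x) ∂μ + ∑' k, ENNReal.ofReal (c / 2 ^ (k + 1)) * η k := by
  have ht₀ (k : ℕ) : 0 ≤ c / 2 ^ (k + 1) := by positivity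
  calc ∫⁻ x, ENNReal.ofReal (∑' k, c / 2 ^ (k + 1) * f k x) ∂μ
      = ∑' k, ENNReal.ofReal (c / 2 ^ (k + 1)) * ∫⁻ x, ENNReal.ofReal (f k x) ∂μ :=
        lintegral_ofReal_tsum_mul μ hf ht₀ (hasSum_div_two_pow_succ c).summable
    _ ≤ ∑' k, ENNReal.ofReal (c / 2 ^ (k + 1)) * (μ {x | c / 2 ^ (k + 1) ≤ ψ x} + η k) :=
        ENNReal.tsum_le_tsum fun k => mul_le_mul_right
          ((hfμ k).trans (add_le_add_left (measure_closure_setOf_le_le hae _) _)) _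
    _ = ∑' k, ENNReal.ofReal (c / 2 ^ (k + 1)) * μ {x | c / 2 ^ (k + 1) ≤ ψ x}
          + ∑' k, ENNReal.ofReal (c / 2 ^ (k + 1)) * η k := by
        simp_rw [mul_add]
        exact ENNReal.tsum_add
    _ ≤ 2 * ∫⁻ x, ENNReal.ofReal (ψ x) ∂μ + ∑' k, ENNReal.ofReal (c / 2 ^ (k + 1)) * η k :=
        add_le_add_left (tsum_ofReal_mul_measure_le_two_mul_lintegral hψ hψ₀ hc) _

end BumpSeries

theorem exists_continuous_ge_integral_le_two_mul_add {X : Type*} [TopologicalSpace X]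
    [RegularSpace X] [LocallyCompactSpace X] [MeasurableSpace X] [OpensMeasurableSpace X]
    {μ : Measure X} [μ.OuterRegular] {ψ : X → ℝ} {c δ : ℝ} (hc : 0 < c) (hδ : 0 < δ)
    (hψ₀ : ∀ x, 0 ≤ ψ x) (hψc : ∀ x, ψ x ≤ c) (hsupp : HasCompactSupport ψ)
    (hae : μ {x | ¬ContinuousAt ψ x} = 0) (hint : Integrable ψ μ) :
    ∃ h : X → ℝ, Continuous h ∧ HasCompactSupport h ∧ (∀ x, ψ x ≤ h x ∧ h x ≤ c) ∧
      ∫ x, h x ∂μ ≤ 2 * ∫ x, ψ x ∂μ + δ := by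
  set t : ℕ → ℝ := fun k => c / 2 ^ (k + 1)
  have ht (k : ℕ) : 0 < t k := by positivity
  have ht₀ (k : ℕ) : 0 ≤ t k := (ht k).le
  have hts : HasSum t c := hasSum_div_two_pow_succ c
  have hψint : 0 ≤ ∫ x, ψ x ∂μ := integral_nonneg hψ₀
  obtain ⟨K, hK, hψK⟩ := exists_compact_superset hsupp
  have hlevel (k : ℕ) : closure {x | t k ≤ ψ x} ⊆ interior K :=
    (closure_mono fun _ hx => ((ht k).trans_le hx).ne').trans hψK
  obtain ⟨η, hη, hηsum⟩ := ENNReal.exists_pos_tsum_mul_lt_of_countable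
    (ENNReal.ofReal_pos.2 hδ).ne' (fun k => ENNReal.ofReal (t k)) fun _ => ENNReal.ofReal_ne_top
  choose f hf₁ hf₀ hf hfμ using fun k => exists_continuous_eqOn_one_lintegral_le μ
    (hK.of_isClosed_subset isClosed_closure ((hlevel k).trans interior_subset)) isOpen_interior
    (hlevel k) (ENNReal.coe_ne_zero.2 (hη k).ne')
  have hsum := summable_mul_of_mem_Icc hf ht₀ hts.summable
  refine ⟨fun x => ∑' k, t k * f k x, continuous_tsum_mul hf ht₀ hts.summable,
    HasCompactSupport.intro hK fun x hx => ?_, fun x => ⟨?_, ?_⟩, ?_⟩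
  · simp [hf₀ _ fun hxK => hx (interior_subset hxK)]
  · calc ψ x ≤ dyadicLayerSum c (ψ x) := le_dyadicLayerSum hc.le (hψc x)
      _ ≤ ∑' k, t k * f k x := by
        refine (summable_dyadicLayer c (ψ x)).tsum_le_tsum (fun k => ?_) (hsum x)
        split_ifs with hk
        · simp [hf₁ k (subset_closure hk), t]
        · exact mul_nonneg (ht₀ k) (hf k x).1
  · calc ∑' k, t k * f k x ≤ ∑' k, t k :=
          (hsum x).tsum_le_tsum (fun k => mul_le_of_le_one_right (ht₀ k) (hf k x).2) hts.summable
      _ = c := hts.tsum_eq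
  · have hh₀ : 0 ≤ᵐ[μ] fun x => ∑' k, t k * f k x :=
      ae_of_all _ fun x => tsum_nonneg fun k => mul_nonneg (ht₀ k) (hf k x).1
    rw [integral_eq_lintegral_of_nonneg_ae hh₀
      (continuous_tsum_mul hf ht₀ hts.summable).aestronglyMeasurable]
    refine ENNReal.toReal_le_of_le_ofReal (by positivity) ?_
    calc ∫⁻ x, ENNReal.ofReal (∑' k, t k * f k x) ∂μ
        ≤ 2 * ∫⁻ x, ENNReal.ofReal (ψ x) ∂μ + ∑' k, ENNReal.ofReal (t k) * η k :=
          lintegral_ofReal_tsum_dyadic_mul_le hc.le hψ₀ hint.aemeasurable hae hf hfμ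
      _ ≤ 2 * ∫⁻ x, ENNReal.ofReal (ψ x) ∂μ + ENNReal.ofReal δ := add_le_add_right hηsum.le _
      _ = ENNReal.ofReal (2 * ∫ x, ψ x ∂μ + δ) := by
          rw [ENNReal.ofReal_add (by positivity) hδ.le, ENNReal.ofReal_mul zero_le_two,
            ofReal_integral_eq_lintegral_ofReal hint (ae_of_all _ hψ₀), ENNReal.ofReal_ofNat]

theorem stmt_13 {X : Type*} [TopologicalSpace X] [LocallyCompactSpace X] [T2Space X]
    [MeasurableSpace X] [BorelSpace X]
    (μ : Measure X) [μ.Regular]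
    (ψ : X → ℝ) (hpos : ∀ x, 0 ≤ ψ x) (hsupp : HasCompactSupport ψ)
    (hae : μ {x | ¬ ContinuousAt ψ x} = 0) (hint : Integrable ψ μ)
    (n : ℕ) (hbd : ∀ x, ψ x ≤ n)
    (ε : ℝ) (hε : 0 < ε) (hψε : (∫ x, ψ x ∂μ) ≤ ε) :
    ∃ h : X → ℝ, Continuous h ∧ HasCompactSupport h ∧
      (∀ᵐ x ∂μ, ψ x ≤ h x ∧ h x ≤ 4 * n) ∧ (∫ x, h x ∂μ) ≤ 4 * n * ε := by
  rcases n.eq_zero_or_pos with rfl | hn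
  · have hψ (x : X) : ψ x = 0 := le_antisymm (by simpa using hbd x) (hpos x)
    exact ⟨0, continuous_const, .zero, ae_of_all _ fun x => by simp [hψ x], by simp⟩
  have hn₁ : (1 : ℝ) ≤ n := Nat.one_le_cast.2 hn
  obtain ⟨h, hcont, hsupp_h, hbounds, hint_h⟩ :=
    exists_continuous_ge_integral_le_two_mul_add (by positivity : (0 : ℝ) < n)
      (by positivity : 0 < 2 * ε) hpos hbd hsupp hae hint
  refine ⟨h, hcont, hsupp_h, ae_of_all _ fun x => ⟨(hbounds x).1, ?_⟩, by nlinarith⟩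
  linarith [(hbounds x).2]
end

section
/- Let K be a finite group, N ⊴ K a normal subgroup, θ : K → K a group automorphism with θ(N) = N, and δ ∈ K. Let U = {k·δ·θ(k)⁻¹ : k ∈ K} and M = #{k ∈ K : k·δ·θ(k)⁻¹ ∈ δN}. Then for every g ∈ K: (1/|K|) · #{k ∈ K : k⁻¹·g·θ(k) ∈ δN} equals M/|K| if g ∈ U·N (equivalently g ∈ N·U), and equals 0 otherwise. -/
/-!
Write `g ↦ k⁻¹ * g * θ k` for the twisted conjugation by `k`. The set of `k` that twist `g` into
`δN` is unchanged when `g` is multiplied on the right by an element of `N` (since `N` is normal),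
and is left-translated by `h` when `g` is replaced by `h * g * (θ h)⁻¹`. So its size depends only on
the class of `g` in `U·N`, where it is the size for `g = δ`, which is `M` after `k ↦ k⁻¹`; and it is
empty off `U·N`, since `k⁻¹ * g * θ k ∈ δN` exhibits `g ∈ k * δ * (θ k)⁻¹ * N`.
-/

section TwistedConj

variable {K : Type*} [Group K] {N : Subgroup K} [N.Normal]

theorem exists_mem_eq_twistedConj_mul {θ : K → K} {δ k g : K}
    (h : δ⁻¹ * (k⁻¹ * g * θ k) ∈ N) : ∃ m ∈ N, g = k * δ * (θ k)⁻¹ * m :=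
  ⟨θ k * (δ⁻¹ * (k⁻¹ * g * θ k)) * (θ k)⁻¹,
    Subgroup.Normal.conj_mem inferInstance _ h (θ k), by group⟩

theorem twistedConj_mul_mem_leftCoset_iff (θ : K → K) (δ k g : K) {m : K} (hm : m ∈ N) :
    δ⁻¹ * (k⁻¹ * (g * m) * θ k) ∈ N ↔ δ⁻¹ * (k⁻¹ * g * θ k) ∈ N := by
  have hconj : (θ k)⁻¹ * m * θ k ∈ N := by
    simpa using Subgroup.Normal.conj_mem inferInstance m hm (θ k)⁻¹
  rw [show δ⁻¹ * (k⁻¹ * (g * m) * θ k) = δ⁻¹ * (k⁻¹ * g * θ k) * ((θ k)⁻¹ * m * θ k) by group]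
  exact mul_mem_cancel_right hconj

variable {F : Type*} [FunLike F K K] [MonoidHomClass F K K]

theorem card_twistedConj_translate (θ : F) (P : K → Prop) (h g : K) :
    Nat.card {k : K // P (k⁻¹ * (h * g * (θ h)⁻¹) * θ k)} =
      Nat.card {k : K // P (k⁻¹ * g * θ k)} := by
  refine Nat.card_congr (Equiv.subtypeEquiv (Equiv.mulLeft h⁻¹) fun k => ?_)
  simp only [Equiv.coe_mulLeft, map_mul, map_inv, mul_inv_rev, inv_inv]
  group

theorem card_twistedConj_inv (θ : F) (P : K → Prop) (g : K) :
    Nat.card {k : K // P (k⁻¹ * g * θ k)} = Nat.card {k : K // P (k * g * (θ k)⁻¹)} :=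
  Nat.card_congr (Equiv.subtypeEquiv (Equiv.inv K) fun k => by simp)

end TwistedConj

open scoped Classical in
theorem stmt_17_general {K : Type*} [Group K] [Fintype K]
    (N : Subgroup K) (hN : N.Normal) (θ : K ≃* K)
    (δ : K) (g : K) :
    (Nat.card {k : K // δ⁻¹ * (k⁻¹ * g * θ k) ∈ N} : ℚ) / (Fintype.card K : ℚ) =
      if ∃ k : K, ∃ m ∈ N, g = k * δ * (θ k)⁻¹ * m then
        (Nat.card {k : K // δ⁻¹ * (k * δ * (θ k)⁻¹) ∈ N} : ℚ) / (Fintype.card K : ℚ)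
      else 0 := by
  split_ifs with hg
  · obtain ⟨k₀, m, hm, rfl⟩ := hg
    simp_rw [twistedConj_mul_mem_leftCoset_iff θ δ _ _ hm,
      card_twistedConj_translate θ (fun x => δ⁻¹ * x ∈ N) k₀ δ,
      card_twistedConj_inv θ (fun x => δ⁻¹ * x ∈ N) δ]
  · have : IsEmpty {k : K // δ⁻¹ * (k⁻¹ * g * θ k) ∈ N} :=
      ⟨fun ⟨k, hk⟩ => hg ⟨k, exists_mem_eq_twistedConj_mul hk⟩⟩
    simp

open scoped Classical in
theorem stmt_17 {K : Type*} [Group K] [Fintype K]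
    (N : Subgroup K) (hN : N.Normal) (θ : K ≃* K)
    (hθ : ∀ x : K, x ∈ N ↔ θ x ∈ N) (δ : K) (g : K) :
    (Nat.card {k : K // δ⁻¹ * (k⁻¹ * g * θ k) ∈ N} : ℚ) / (Fintype.card K : ℚ) =
      if ∃ k : K, ∃ m ∈ N, g = k * δ * (θ k)⁻¹ * m then
        (Nat.card {k : K // δ⁻¹ * (k * δ * (θ k)⁻¹) ∈ N} : ℚ) / (Fintype.card K : ℚ)
      else 0 :=
  stmt_17_general N hN θ δ g
end

section
/- Let K be a field of characteristic 0, n ≥ 2, and J ∈ GL_n(K) with ᵗJ = (-1)^{n-1}·J. Define θ(g) = J·ᵗg⁻¹·J⁻¹. Let g ∈ GL_n(K) satisfy (g·θ(g))² = 1_n. Then there exist y ∈ GL_n(K), natural numbers p, q with p + q = n and q even, an invertible symmetric matrix B ∈ GL_p(K), and an invertible alternating matrix C ∈ GL_q(K), such that y⁻¹·g·θ(y) · J equals the block-diagonal matrix diag(B, C). -/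
/-!
Put `M = g J` and `ε = (-1)^(n-1)`. From `ᵗJ = ε J` one gets `g θ(g) = ε M ᵗM⁻¹`, so
`u = ᵗM⁻¹ M` is an involution with `M = ᵗM u`. In characteristic `≠ 2` the space splits into the
`±1`-eigenspaces of `u`, of dimensions `p` and `q`. For an eigenvector `v` of `u` with eigenvalue
`c` and any `w`, `ᵗw M v = c · ᵗv M w`; hence the Gram matrix `D = R M ᵗR` of the form `ᵗx M y` in
an eigenbasis (the rows of `R`) is block diagonal, symmetric on the first block and alternating on
the second, and `D = y⁻¹ g θ(y) J` for `y = R⁻¹`. Finally `ᵗD = diag(1_p, -1_q) D` with `D`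
invertible forces `(-1)^q = 1`, i.e. `q` even.
-/

open Matrix Module
open scoped Finset

section Involution

variable {K V : Type*} [Field K] [NeZero (2 : K)] [AddCommGroup V] [Module K V]

theorem Module.End.isCompl_ker_sub_one_ker_add_one {f : Module.End K V} (hf : f * f = 1) :
    IsCompl (LinearMap.ker (f - 1)) (LinearMap.ker (f + 1)) := by
  have hff (x : V) : f (f x) = x := by rw [← Module.End.mul_apply, hf, Module.End.one_apply]
  constructor
  · rw [Submodule.disjoint_def]
    intro x hx hx'
    simp only [LinearMap.mem_ker, LinearMap.sub_apply, LinearMap.add_apply, Module.End.one_apply,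
      sub_eq_zero] at hx hx'
    have h2x : (2 : K) • x = 0 := by rw [two_smul]; nth_rw 1 [← hx]; exact hx'
    exact (smul_eq_zero.1 h2x).resolve_left two_ne_zero
  · rw [codisjoint_iff_le_sup]
    intro x _
    have hx : x = (2⁻¹ : K) • (x + f x) + (2⁻¹ : K) • (x - f x) := by
      rw [← smul_add, add_add_sub_cancel, ← two_smul K, smul_smul, inv_mul_cancel₀ two_ne_zero,
        one_smul]
    rw [hx]
    refine Submodule.add_mem_sup ?_ ?_ <;>
      simp [hff, add_comm]

theorem Module.End.exists_basis_eigen_of_mul_self_eq_one [FiniteDimensional K V] {n : ℕ}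
    (hn : finrank K V = n) {f : Module.End K V} (hf : f * f = 1) :
    ∃ p ≤ n, ∃ b : Basis (Fin n) K V,
      ∀ i : Fin n, ((i : ℕ) < p → f (b i) = b i) ∧ (p ≤ (i : ℕ) → f (b i) = -b i) := by
  have hc := isCompl_ker_sub_one_ker_add_one hf
  obtain rfl : finrank K (LinearMap.ker (f - 1)) + finrank K (LinearMap.ker (f + 1)) = n := by
    rw [← hn, Submodule.finrank_add_eq_of_isCompl hc]
  let b := (((finBasis K _).prod (finBasis K _)).map
    (Submodule.prodEquivOfIsCompl _ _ hc)).reindex finSumFinEquiv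
  refine ⟨_, le_self_add, b, Fin.addCases (fun i => ⟨fun _ => ?_, fun h => ?_⟩)
    (fun i => ⟨fun h => ?_, fun _ => ?_⟩)⟩
  · have h := LinearMap.mem_ker.1 ((finBasis K _) i).2
    rw [LinearMap.sub_apply, Module.End.one_apply, sub_eq_zero] at h
    simpa [b] using h
  · rw [Fin.val_castAdd] at h; omega
  · rw [Fin.val_natAdd] at h; omega
  · have h := LinearMap.mem_ker.1 ((finBasis K _) i).2
    rw [LinearMap.add_apply, Module.End.one_apply, add_eq_zero_iff_eq_neg] at h
    simpa [b] using h

end Involution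

namespace Matrix

variable {K : Type*} [Field K] {ι : Type*} [Fintype ι]

theorem mul_theta_eq_smul_mul_transpose_inv [DecidableEq ι] {g J : Matrix ι ι K}
    (hg : IsUnit g.det) (hJ : IsUnit J.det) {ε : K} (hJt : Jᵀ = ε • J) :
    g * (J * (g⁻¹)ᵀ * J⁻¹) = ε • (g * J * ((g * J)ᵀ)⁻¹) := by
  have hMt : IsUnit ((g * J)ᵀ).det := by rw [det_transpose, det_mul]; exact hg.mul hJ
  have hgt : IsUnit (gᵀ).det := by rwa [det_transpose]
  have key : g * (J * (g⁻¹)ᵀ * J⁻¹) * (g * J)ᵀ = ε • (g * J) := by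
    rw [transpose_mul, hJt, transpose_nonsing_inv]
    simp only [Matrix.mul_assoc, Matrix.smul_mul, Matrix.mul_smul,
      nonsing_inv_mul_cancel_left _ _ hJ, nonsing_inv_mul _ hgt, Matrix.mul_one]
  rw [← Matrix.smul_mul, ← key, Matrix.mul_nonsing_inv_cancel_right _ _ hMt]

theorem transpose_inv_mul_mul_self_eq_one [DecidableEq ι] {M : Matrix ι ι K} (hM : IsUnit M.det)
    (h : M * (Mᵀ)⁻¹ * (M * (Mᵀ)⁻¹) = 1) : (Mᵀ)⁻¹ * M * ((Mᵀ)⁻¹ * M) = 1 := by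
  have hMt : IsUnit (Mᵀ).det := by rwa [det_transpose]
  calc (Mᵀ)⁻¹ * M * ((Mᵀ)⁻¹ * M) = (Mᵀ)⁻¹ * (M * (Mᵀ)⁻¹ * (M * (Mᵀ)⁻¹)) * Mᵀ := by
        simp only [Matrix.mul_assoc, nonsing_inv_mul _ hMt, Matrix.mul_one]
    _ = 1 := by rw [h, Matrix.mul_one, nonsing_inv_mul _ hMt]

theorem dotProduct_mulVec_eq_mul_of_mulVec_eq_smul {R : Type*} [CommRing R] {M u : Matrix ι ι R}
    (hM : Mᵀ * u = M) {v : ι → R} {c : R} (hv : u *ᵥ v = c • v) (w : ι → R) :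
    w ⬝ᵥ M *ᵥ v = c * (v ⬝ᵥ M *ᵥ w) := by
  have hMv : M *ᵥ v = c • (Mᵀ *ᵥ v) := by
    conv_lhs => rw [← hM]
    rw [← mulVec_mulVec, hv, mulVec_smul]
  rw [hMv, dotProduct_smul, dotProduct_mulVec, vecMul_transpose, dotProduct_comm, smul_eq_mul]

theorem of_mul_mul_transpose_of_apply {R : Type*} [CommRing R] (v : ι → ι → R) (M : Matrix ι ι R)
    (i j : ι) : (of v * M * (of v)ᵀ) i j = v i ⬝ᵥ M *ᵥ v j := by
  simp only [mul_apply, transpose_apply, of_apply, dotProduct, mulVec, Finset.mul_sum,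
    Finset.sum_mul]
  rw [Finset.sum_comm]
  simp only [mul_assoc]

theorem of_mul_mul_transpose_of_symm_skew {R : Type*} [CommRing R] {n p : ℕ}
    {M u : Matrix (Fin n) (Fin n) R} (hM : Mᵀ * u = M) {v : Fin n → Fin n → R}
    (hv : ∀ i : Fin n, ((i : ℕ) < p → u *ᵥ v i = v i) ∧ (p ≤ (i : ℕ) → u *ᵥ v i = -v i)) :
    (∀ i j : Fin n, (i : ℕ) < p → (of v * M * (of v)ᵀ) i j = (of v * M * (of v)ᵀ) j i) ∧
      (∀ i j : Fin n, p ≤ (i : ℕ) → (of v * M * (of v)ᵀ) i j = -(of v * M * (of v)ᵀ) j i) := by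
  simp only [of_mul_mul_transpose_of_apply]
  refine ⟨fun i j hi => ?_, fun i j hi => ?_⟩
  · rw [dotProduct_mulVec_eq_mul_of_mulVec_eq_smul hM (c := 1)
      (by rw [one_smul, (hv i).1 hi]) (v j), one_mul]
  · rw [dotProduct_mulVec_eq_mul_of_mulVec_eq_smul hM (c := -1)
      (by rw [neg_one_smul, (hv i).2 hi]) (v j), neg_one_mul, neg_neg]

theorem apply_eq_zero_of_symm_skew [NeZero (2 : K)] {n p : ℕ} {D : Matrix (Fin n) (Fin n) K}
    (hsymm : ∀ i j : Fin n, (i : ℕ) < p → D i j = D j i)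
    (hskew : ∀ i j : Fin n, p ≤ (i : ℕ) → D i j = -D j i) {i j : Fin n} (hi : (i : ℕ) < p)
    (hj : p ≤ (j : ℕ)) : D i j = 0 ∧ D j i = 0 := by
  have h : D i j = -D i j := (hsymm i j hi).trans (hskew j i hj)
  have hij : D i j = 0 :=
    (mul_eq_zero.1 (by linear_combination h : (2 : K) * D i j = 0)).resolve_left two_ne_zero
  exact ⟨hij, by rw [hskew j i hj, hij, neg_zero]⟩

theorem even_sub_of_isUnit_det_of_symm_skew [NeZero (2 : K)] {n p : ℕ}
    {D : Matrix (Fin n) (Fin n) K} (hD : IsUnit D.det)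
    (hsymm : ∀ i j : Fin n, (i : ℕ) < p → D i j = D j i)
    (hskew : ∀ i j : Fin n, p ≤ (i : ℕ) → D i j = -D j i) : Even (n - p) := by
  let s : Fin n → K := fun i => if (i : ℕ) < p then 1 else -1
  have hDt : Dᵀ = diagonal s * D := by
    ext i j
    by_cases hi : (i : ℕ) < p
    · simp [s, hi, hsymm i j hi]
    · simp [s, hi, hskew i j (not_lt.1 hi)]
  have hs : ∏ i, s i = 1 := by
    have := congrArg det hDt
    rw [det_transpose, det_mul, det_diagonal] at this
    exact (mul_eq_right₀ hD.ne_zero).1 this.symm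
  have hcard : #{i : Fin n | ¬ (i : ℕ) < p} = n - p := by
    have := Finset.card_filter_add_card_filter_not (s := Finset.univ) fun i : Fin n => (i : ℕ) < p
    rw [Fin.card_filter_val_lt, Finset.card_univ, Fintype.card_fin] at this
    omega
  rw [Finset.prod_ite, Finset.prod_const_one, Finset.prod_const, one_mul, hcard] at hs
  have hneg : (-1 : K) ≠ 1 := fun h => two_ne_zero (by linear_combination -h : (2 : K) = 0)
  exact (neg_one_pow_eq_one_iff_even hneg).1 hs

end Matrix

theorem stmt_18_general {n : ℕ} {K : Type*} [Field K] [CharZero K]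
    (J : Matrix (Fin n) (Fin n) K) (hJ : IsUnit J.det)
    (hJt : Jᵀ = ((-1 : K) ^ (n - 1)) • J)
    (g : Matrix (Fin n) (Fin n) K) (hg : IsUnit g.det)
    (hinv : (g * (J * (g⁻¹)ᵀ * J⁻¹)) ^ 2 = 1) :
    ∃ y : Matrix (Fin n) (Fin n) K, IsUnit y.det ∧
    ∃ p : ℕ, p ≤ n ∧ Even (n - p) ∧
    ∃ D : Matrix (Fin n) (Fin n) K,
      D = y⁻¹ * g * (J * (y⁻¹)ᵀ * J⁻¹) * J ∧
      IsUnit D.det ∧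
      (∀ i j : Fin n,
        (((i : ℕ) < p ∧ p ≤ (j : ℕ)) ∨ ((j : ℕ) < p ∧ p ≤ (i : ℕ))) → D i j = 0) ∧
      (∀ i j : Fin n, (i : ℕ) < p → (j : ℕ) < p → D j i = D i j) ∧
      (∀ i j : Fin n, p ≤ (i : ℕ) → p ≤ (j : ℕ) → D j i = -D i j) := by
  set M := g * J
  have hM : IsUnit M.det := by rw [det_mul]; exact hg.mul hJ
  set u := (Mᵀ)⁻¹ * M
  have hMu : Mᵀ * u = M := mul_nonsing_inv_cancel_left _ _ (by rwa [det_transpose])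
  have hu : u * u = 1 := by
    refine transpose_inv_mul_mul_self_eq_one hM ?_
    rwa [mul_theta_eq_smul_mul_transpose_inv hg hJ hJt, smul_pow, ← pow_mul, mul_comm, pow_mul,
      neg_one_sq, one_pow, one_smul, sq] at hinv
  obtain ⟨p, hp, b, hb⟩ := Module.End.exists_basis_eigen_of_mul_self_eq_one
    (Module.finrank_fin_fun K) (f := toLin' u)
    (by rw [Module.End.mul_eq_comp, ← toLin'_mul, hu, toLin'_one, Module.End.one_eq_id])
  simp only [toLin'_apply] at hb
  set R := of fun i => (b i : Fin n → K)
  have hR : IsUnit R.det :=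
    (isUnit_iff_isUnit_det R).1 (linearIndependent_rows_iff_isUnit.1 b.linearIndependent)
  obtain ⟨hsymm, hskew⟩ := of_mul_mul_transpose_of_symm_skew hMu hb
  have hD : IsUnit (R * M * Rᵀ).det := by
    rw [det_mul, det_mul, det_transpose]
    exact (hR.mul hM).mul hR
  refine ⟨R⁻¹, isUnit_nonsing_inv_det R hR, p, hp,
    even_sub_of_isUnit_det_of_symm_skew hD hsymm hskew, R * M * Rᵀ, ?_, hD, ?_,
    fun i j hi _ => (hsymm i j hi).symm, fun i j _ hj => hskew j i hj⟩
  · rw [nonsing_inv_nonsing_inv R hR]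
    simp only [M, Matrix.mul_assoc, nonsing_inv_mul J hJ, Matrix.mul_one]
  · rintro i j (⟨hi, hj⟩ | ⟨hj, hi⟩)
    exacts [(apply_eq_zero_of_symm_skew hsymm hskew hi hj).1,
      (apply_eq_zero_of_symm_skew hsymm hskew hj hi).2]

theorem stmt_18 {n : ℕ} {K : Type*} [Field K] [CharZero K] (hn : 2 ≤ n)
    (J : Matrix (Fin n) (Fin n) K) (hJ : IsUnit J.det)
    (hJt : Jᵀ = ((-1 : K) ^ (n - 1)) • J)
    (g : Matrix (Fin n) (Fin n) K) (hg : IsUnit g.det)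
    (hinv : (g * (J * (g⁻¹)ᵀ * J⁻¹)) ^ 2 = 1) :
    ∃ y : Matrix (Fin n) (Fin n) K, IsUnit y.det ∧
    ∃ p : ℕ, p ≤ n ∧ Even (n - p) ∧
    ∃ D : Matrix (Fin n) (Fin n) K,
      D = y⁻¹ * g * (J * (y⁻¹)ᵀ * J⁻¹) * J ∧
      IsUnit D.det ∧
      (∀ i j : Fin n,
        (((i : ℕ) < p ∧ p ≤ (j : ℕ)) ∨ ((j : ℕ) < p ∧ p ≤ (i : ℕ))) → D i j = 0) ∧
      (∀ i j : Fin n, (i : ℕ) < p → (j : ℕ) < p → D j i = D i j) ∧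
      (∀ i j : Fin n, p ≤ (i : ℕ) → p ≤ (j : ℕ) → D j i = -D i j) :=
  stmt_18_general J hJ hJt g hg hinv
end
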